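/- arXiv:2502.13385 — 2 statements merged into one kernel-verified Lean document; each statement's English description precedes it below -/
import Mathlib

section
/- Let T(t) denote the measure assigned by the standard Gaussian distribution on ℝ (mean 0, variance 1) to the open half-line (t, ∞). Then the ratio ((1/2)·log(1 + t²)) / (log(log(1/T(t)))) tends to 1/2 as t tends to +∞. Consequently, the minimal Gaussian–Gaussian KL divergence (1/2)·log(1 + (Φ⁻¹(π))²) needed to realize spike probability π grows only double-logarithmically, namely as Θ(log log(1/π)), as π → 0. -/
/-!
The Chernoff bound and the mass of `(t, t + 1]` squeeze the tail between the density at `t + 1`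
and `exp (-t ^ 2 / 2)`, so `log (1 / T t)` lies between `t ^ 2 / 2` and `2 t ^ 2`. Hence
`log (log (1 / T t)) ~ 2 log t`, while `log (1 + t ^ 2) ~ 2 log t`, and the ratio tends to
`(1 / 2 · 2) / 2`.
-/

open MeasureTheory ProbabilityTheory Set Filter Real Topology NNReal

lemma Real.tendsto_log_div_log_of_mul_pow_le_of_le_mul_pow {f : ℝ → ℝ} {a b : ℝ} (k : ℕ)
    (ha : 0 < a) (hlo : ∀ᶠ t in atTop, a * t ^ k ≤ f t) (hhi : ∀ᶠ t in atTop, f t ≤ b * t ^ k) :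
    Tendsto (fun t => log (f t) / log t) atTop (𝓝 k) := by
  have hlog_div (c : ℝ) : Tendsto (fun t => c / log t + k) atTop (𝓝 k) := by
    simpa using (tendsto_const_nhds.div_atTop tendsto_log_atTop).add_const (k : ℝ)
  have hev := hlo.and (hhi.and (eventually_gt_atTop 1))
  refine tendsto_of_tendsto_of_tendsto_of_le_of_le' (hlog_div (log a)) (hlog_div (log b)) ?_ ?_
  all_goals
    filter_upwards [hev] with t ⟨hat, htb, ht⟩
    have hlogt : 0 < log t := log_pos ht
    have htk : 0 < a * t ^ k := by positivity
    rw [div_add' _ _ _ hlogt.ne', div_le_div_iff_of_pos_right hlogt]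
  · calc log a + k * log t = log (a * t ^ k) := by
          rw [log_mul ha.ne' (by positivity), log_pow]
      _ ≤ log (f t) := log_le_log htk hat
  · calc log (f t) ≤ log (b * t ^ k) := log_le_log (htk.trans_le hat) htb
      _ = log b + k * log t := by
          have hb : 0 < b := pos_of_mul_pos_left (htk.trans_le (hat.trans htb)) (by positivity)
          rw [log_mul hb.ne' (by positivity), log_pow]

namespace ProbabilityTheory

lemma gaussianReal_real_Ioi_le (μ : ℝ) (v : ℝ≥0) {t : ℝ} (ht : μ ≤ t) :
    (gaussianReal μ v).real (Ioi t) ≤ rexp (-(t - μ) ^ 2 / (2 * v)) := by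
  -- Chernoff bound at the optimal parameter `(t - μ) / v`; for `v = 0` both sides are `1`.
  have hs : 0 ≤ (t - μ) / v := div_nonneg (by linarith) v.2
  calc (gaussianReal μ v).real (Ioi t)
      ≤ (gaussianReal μ v).real {x | t ≤ id x} := measureReal_mono fun _ hx => (mem_Ioi.mp hx).le
    _ ≤ rexp (-((t - μ) / v) * t) * mgf id (gaussianReal μ v) ((t - μ) / v) :=
        measure_ge_le_exp_mul_mgf t hs (integrable_exp_mul_gaussianReal _)
    _ = rexp (-(t - μ) ^ 2 / (2 * v)) := by
        rw [mgf_id_gaussianReal, ← Real.exp_add]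
        congr 1
        rcases eq_or_ne (v : ℝ) 0 with hv | hv
        · simp [hv]
        · field_simp
          ring

lemma gaussianPDFReal_add_one_le_gaussianReal_real_Ioi (μ : ℝ) {v : ℝ≥0} (hv : v ≠ 0) {t : ℝ}
    (ht : μ ≤ t) : gaussianPDFReal μ v (t + 1) ≤ (gaussianReal μ v).real (Ioi t) := by
  have hpdf : ∀ x ∈ Ioc t (t + 1), gaussianPDFReal μ v (t + 1) ≤ gaussianPDFReal μ v x := by
    rintro x ⟨htx, hxt⟩
    unfold gaussianPDFReal
    gcongr
    nlinarith
  calc gaussianPDFReal μ v (t + 1)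
      = gaussianPDFReal μ v (t + 1) * volume.real (Ioc t (t + 1)) := by simp
    _ ≤ ∫ x in Ioc t (t + 1), gaussianPDFReal μ v x :=
        setIntegral_ge_of_const_le_real measurableSet_Ioc (by simp) hpdf
          (integrable_gaussianPDFReal μ v).integrableOn
    _ = (gaussianReal μ v).real (Ioc t (t + 1)) := by
        rw [measureReal_def, gaussianReal_apply_eq_integral μ hv,
          ENNReal.toReal_ofReal (setIntegral_nonneg measurableSet_Ioc
            fun x _ => gaussianPDFReal_nonneg μ v x)]
    _ ≤ (gaussianReal μ v).real (Ioi t) := measureReal_mono Ioc_subset_Ioi_self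

lemma sq_div_two_le_log_one_div_gaussianReal_real_Ioi {t : ℝ} (ht : 0 ≤ t) :
    t ^ 2 / 2 ≤ log (1 / (gaussianReal 0 1).real (Ioi t)) := by
  have hpos : 0 < (gaussianReal 0 1).real (Ioi t) :=
    (gaussianPDFReal_pos 0 1 _ one_ne_zero).trans_le
      (gaussianPDFReal_add_one_le_gaussianReal_real_Ioi 0 one_ne_zero ht)
  have hle := gaussianReal_real_Ioi_le 0 1 ht
  rw [one_div, log_inv, le_neg, ← log_exp (-(t ^ 2 / 2))]
  refine log_le_log hpos ?_
  simpa [neg_div] using hle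

lemma log_one_div_gaussianReal_real_Ioi_le {t : ℝ} (ht : 2 ≤ t) :
    log (1 / (gaussianReal 0 1).real (Ioi t)) ≤ 2 * t ^ 2 := by
  have hpdf :=
    gaussianPDFReal_add_one_le_gaussianReal_real_Ioi 0 one_ne_zero (by linarith : 0 ≤ t)
  have hsqrt : √(2 * π) ≤ 3 := by
    rw [sqrt_le_left (by norm_num)]
    linarith [pi_lt_d2]
  have hlog_sqrt : log √(2 * π) ≤ 2 := by
    linarith [log_le_sub_one_of_pos (by positivity : 0 < √(2 * π))]
  rw [one_div, log_inv, neg_le]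
  calc -(2 * t ^ 2) ≤ -log √(2 * π) - (t + 1) ^ 2 / 2 := by nlinarith
    _ = log (gaussianPDFReal 0 1 (t + 1)) := by
        rw [gaussianPDFReal, log_mul (by positivity) (exp_pos _).ne', log_inv, log_exp]
        simp only [coe_one, mul_one, sub_zero]
        ring
    _ ≤ log ((gaussianReal 0 1).real (Ioi t)) :=
        log_le_log (gaussianPDFReal_pos 0 1 _ one_ne_zero) hpdf

end ProbabilityTheory

theorem min_gaussian_kl_double_log_asymptotic :
    Filter.Tendsto
      (fun t : ℝ =>
        ((1 / 2) * Real.log (1 + t ^ 2)) /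
          Real.log (Real.log (1 / (gaussianReal 0 1 (Ioi t)).toReal)))
      Filter.atTop (nhds (1 / 2)) := by
  have hkl : Tendsto (fun t : ℝ => log (1 + t ^ 2) / log t) atTop (𝓝 2) := by
    refine mod_cast tendsto_log_div_log_of_mul_pow_le_of_le_mul_pow (a := 1) (b := 2) 2 one_pos
      (.of_forall fun t => by linarith [sq_nonneg t]) ?_
    filter_upwards [eventually_ge_atTop 1] with t ht
    nlinarith
  have htail : Tendsto (fun t => log (log (1 / (gaussianReal 0 1).real (Ioi t))) / log t)
      atTop (𝓝 2) := by
    refine mod_cast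
      tendsto_log_div_log_of_mul_pow_le_of_le_mul_pow (a := 1 / 2) (b := 2) 2 one_half_pos ?_ ?_
    · filter_upwards [eventually_ge_atTop 0] with t ht
      linarith [sq_div_two_le_log_one_div_gaussianReal_real_Ioi ht]
    · filter_upwards [eventually_ge_atTop 2] with t ht
      exact log_one_div_gaussianReal_real_Ioi_le ht
  have hratio := (hkl.const_mul (1 / 2)).div htail two_ne_zero
  rw [show (1 / 2 * 2 / 2 : ℝ) = 1 / 2 by norm_num] at hratio
  refine hratio.congr' ?_
  filter_upwards [eventually_gt_atTop 1] with t ht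
  simp only [Pi.div_apply]
  rw [mul_div_assoc', div_div_div_cancel_right₀ (log_pos ht).ne', measureReal_def]
end

section
/- Let U and V be finite nonempty types. Let w : U → ℝ be nonnegative with ∑_u w(u) = 1, let p : U → V → ℝ satisfy p(u, v) ≥ 0 and ∑_v p(u, v) = 1 for every u, let r : V → ℝ satisfy r(v) > 0 and ∑_v r(v) = 1, and define the mixture m(v) = ∑_u w(u)·p(u, v). Then ∑_u w(u)·(∑_v p(u,v)·log(p(u,v)/r(v))) − ∑_u w(u)·(∑_v p(u,v)·log(p(u,v)/m(v))) = ∑_v m(v)·log(m(v)/r(v)), where by convention any term with p(u,v) = 0 or m(v) = 0 is taken to be 0. -/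
open Finset Real

theorem kl_compensation_identity
    {U V : Type*} [Fintype U] [Fintype V] [Nonempty U] [Nonempty V]
    (w : U → ℝ) (p : U → V → ℝ) (r : V → ℝ)
    (hw : ∀ u, 0 ≤ w u) (hwsum : ∑ u, w u = 1)
    (hp : ∀ u v, 0 ≤ p u v) (hpsum : ∀ u, ∑ v, p u v = 1)
    (hr : ∀ v, 0 < r v) (hrsum : ∑ v, r v = 1)
    (m : V → ℝ) (hm : ∀ v, m v = ∑ u, w u * p u v) :
    (∑ u, w u * (∑ v, p u v * Real.log (p u v / r v)))
      - (∑ u, w u * (∑ v, p u v * Real.log (p u v / m v)))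
      = ∑ v, m v * Real.log (m v / r v) := by
  have key : ∀ u v, w u * (p u v * Real.log (p u v / r v))
      - w u * (p u v * Real.log (p u v / m v))
      = w u * p u v * Real.log (m v / r v) := by
    intro u v
    rcases eq_or_lt_of_le (hw u) with hwu | hwu
    · simp [← hwu]
    rcases eq_or_lt_of_le (hp u v) with hpv | hpv
    · simp [← hpv]
    have hmpos : 0 < m v := by
      rw [hm v]
      have : 0 < w u * p u v := mul_pos hwu hpv
      have h2 : w u * p u v ≤ ∑ u', w u' * p u' v :=
        Finset.single_le_sum (fun u' _ => mul_nonneg (hw u') (hp u' v)) (Finset.mem_univ u)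
      linarith
    rw [Real.log_div hpv.ne' (hr v).ne', Real.log_div hpv.ne' hmpos.ne',
      Real.log_div hmpos.ne' (hr v).ne']
    ring
  calc (∑ u, w u * (∑ v, p u v * Real.log (p u v / r v)))
      - (∑ u, w u * (∑ v, p u v * Real.log (p u v / m v)))
      = ∑ u, ∑ v, (w u * (p u v * Real.log (p u v / r v))
          - w u * (p u v * Real.log (p u v / m v))) := by
        rw [← Finset.sum_sub_distrib]
        congr 1; ext u
        rw [Finset.mul_sum, Finset.mul_sum, ← Finset.sum_sub_distrib]
    _ = ∑ v, ∑ u, w u * p u v * Real.log (m v / r v) := by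
        rw [Finset.sum_comm]
        exact Finset.sum_congr rfl fun v _ => Finset.sum_congr rfl fun u _ => key u v
    _ = ∑ v, m v * Real.log (m v / r v) := by
        refine Finset.sum_congr rfl fun v _ => ?_
        rw [hm v, ← Finset.sum_mul]
end
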